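/- Let M be a binary matroid equal to the delta-sum M₁ △ M₂ of binary matroids M₁, M₂ with E(M₁) ∩ E(M₂) = T, where M₁|T = M₂|T = N. Then for all X ⊆ (E(M₁)−T) ∪ (E(M₂)−T), the rank satisfies r_M(X) ≤ min over Y ⊇ X of [ r_{M₁}(Y ∩ E(M₁)) + r_{M₂}(Y ∩ E(M₂)) − r_N(Y ∩ T) ]. -/
import Mathlib

open Finset

/-- Vectors in GF(2)^α vanishing outside A. -/
noncomputable def supportedOn {α : Type*} [Fintype α] [DecidableEq α] (A : Finset α) :
    Submodule (ZMod 2) (α → ZMod 2) :=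
  Submodule.pi (↑(Aᶜ)) fun _ => ⊥

/-- Rank function of the binary matroid with cycle space 𝒞:
r(A) = |A| − dim{cycles contained in A}. -/
noncomputable def rk {α : Type*} [Fintype α] [DecidableEq α]
    (𝒞 : Submodule (ZMod 2) (α → ZMod 2)) (A : Finset α) : ℤ :=
  (A.card : ℤ) - Module.finrank (ZMod 2) ↥(𝒞 ⊓ supportedOn A)

lemma mem_supportedOn {α : Type*} [Fintype α] [DecidableEq α] {A : Finset α}
    {x : α → ZMod 2} : x ∈ supportedOn A ↔ ∀ i ∉ A, x i = 0 := by
  simp [supportedOn, Submodule.mem_pi]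

lemma supportedOn_mono {α : Type*} [Fintype α] [DecidableEq α] {A B : Finset α}
    (h : A ⊆ B) : supportedOn A ≤ supportedOn B := by
  intro x hx
  rw [mem_supportedOn] at hx ⊢
  exact fun i hi => hx i fun hA => hi (h hA)

/-- Oxley's amalgam upper bound applied to the delta-sum: if M = M₁ △ M₂ where the
binary matroids M₁, M₂ (cycle spaces 𝒞₁, 𝒞₂ supported on E₁ ∪ T, E₂ ∪ T) have common
restriction N = M₁|T = M₂|T, then for every X ⊆ E₁ ∪ E₂ and every Y ⊇ X,
r_M(X) ≤ r_{M₁}(Y ∩ (E₁ ∪ T)) + r_{M₂}(Y ∩ (E₂ ∪ T)) − r_N(Y ∩ T). -/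
theorem stmt_17 {α : Type*} [Fintype α] [DecidableEq α]
    (E₁ E₂ T : Finset α)
    (hd1 : Disjoint E₁ T) (hd2 : Disjoint E₂ T) (hd3 : Disjoint E₁ E₂)
    (𝒞₁ 𝒞₂ : Submodule (ZMod 2) (α → ZMod 2))
    (hsupp₁ : ∀ x ∈ 𝒞₁, ∀ i, i ∉ E₁ ∪ T → x i = 0)
    (hsupp₂ : ∀ x ∈ 𝒞₂, ∀ i, i ∉ E₂ ∪ T → x i = 0)
    (hres : 𝒞₁ ⊓ supportedOn T = 𝒞₂ ⊓ supportedOn T) :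
    ∀ X Y : Finset α, X ⊆ E₁ ∪ E₂ → X ⊆ Y →
      rk ((𝒞₁ ⊔ 𝒞₂) ⊓ supportedOn (E₁ ∪ E₂)) X ≤
        rk 𝒞₁ (Y ∩ (E₁ ∪ T)) + rk 𝒞₂ (Y ∩ (E₂ ∪ T)) -
          rk (𝒞₁ ⊓ supportedOn T) (Y ∩ T) := by
  intro X Y hXE hXY
  classical
  set Y₁ := Y ∩ (E₁ ∪ T) with hY₁
  set Y₂ := Y ∩ (E₂ ∪ T) with hY₂
  set S := Y₁ ∪ Y₂ with hS
  set V₁ : Submodule (ZMod 2) (α → ZMod 2) := 𝒞₁ ⊓ supportedOn Y₁ with hV₁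
  set V₂ : Submodule (ZMod 2) (α → ZMod 2) := 𝒞₂ ⊓ supportedOn Y₂ with hV₂
  set W : Submodule (ZMod 2) (α → ZMod 2) := V₁ ⊔ V₂ with hW
  set D : Submodule (ZMod 2) (α → ZMod 2) :=
    (𝒞₁ ⊔ 𝒞₂) ⊓ supportedOn (E₁ ∪ E₂) with hD
  -- X ⊆ S
  have hXS : X ⊆ S := by
    intro i hi
    have hiY := hXY hi
    rcases Finset.mem_union.1 (hXE hi) with h | h
    · exact Finset.mem_union.2 (Or.inl (Finset.mem_inter.2 ⟨hiY, Finset.mem_union.2 (Or.inl h)⟩))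
    · exact Finset.mem_union.2 (Or.inr (Finset.mem_inter.2 ⟨hiY, Finset.mem_union.2 (Or.inl h)⟩))
  -- Y₁ ∩ Y₂ = Y ∩ T
  have hYinter : Y₁ ∩ Y₂ = Y ∩ T := by
    ext i
    simp only [hY₁, hY₂, Finset.mem_inter, Finset.mem_union]
    constructor
    · rintro ⟨⟨hY, h1⟩, _, h2⟩
      refine ⟨hY, ?_⟩
      rcases h1 with h1 | h1
      · rcases h2 with h2 | h2
        · exact absurd h2 (Finset.disjoint_left.1 hd3 h1)
        · exact h2
      · exact h1
    · rintro ⟨hY, hT⟩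
      exact ⟨⟨hY, Or.inr hT⟩, hY, Or.inr hT⟩
  -- V₁ ⊓ V₂ = N ⊓ supportedOn (Y ∩ T)
  have hVinf : V₁ ⊓ V₂ = (𝒞₁ ⊓ supportedOn T) ⊓ supportedOn (Y ∩ T) := by
    ext x
    simp only [Submodule.mem_inf, hV₁, hV₂]
    constructor
    · rintro ⟨⟨hc1, hs1⟩, hc2, hs2⟩
      have hYT : x ∈ supportedOn (Y ∩ T) := by
        rw [mem_supportedOn] at hs1 hs2 ⊢
        intro i hi
        by_cases h1 : i ∈ Y₁
        · by_cases h2 : i ∈ Y₂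
          · exact absurd (hYinter ▸ Finset.mem_inter.2 ⟨h1, h2⟩) hi
          · exact hs2 i h2
        · exact hs1 i h1
      refine ⟨⟨hc1, ?_⟩, hYT⟩
      exact supportedOn_mono (Finset.inter_subset_right) hYT
    · rintro ⟨⟨hc1, hsT⟩, hsYT⟩
      have hc2 : x ∈ 𝒞₂ := (hres ▸ (Submodule.mem_inf.2 ⟨hc1, hsT⟩) : x ∈ 𝒞₂ ⊓ supportedOn T).1
      have hsub1 : Y ∩ T ⊆ Y₁ := by
        rw [hY₁]; exact Finset.inter_subset_inter Finset.Subset.rfl Finset.subset_union_right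
      have hsub2 : Y ∩ T ⊆ Y₂ := by
        rw [hY₂]; exact Finset.inter_subset_inter Finset.Subset.rfl Finset.subset_union_right
      have h1 : x ∈ supportedOn Y₁ := supportedOn_mono hsub1 hsYT
      have h2 : x ∈ supportedOn Y₂ := supportedOn_mono hsub2 hsYT
      exact ⟨⟨hc1, h1⟩, hc2, h2⟩
  -- dim identity
  have hdim : Module.finrank (ZMod 2) ↥W +
      Module.finrank (ZMod 2) ↥((𝒞₁ ⊓ supportedOn T) ⊓ supportedOn (Y ∩ T)) =
      Module.finrank (ZMod 2) ↥V₁ + Module.finrank (ZMod 2) ↥V₂ := by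
    rw [← hVinf]
    exact Submodule.finrank_sup_add_finrank_inf_eq V₁ V₂
  -- W supported on S
  have hWS : W ≤ supportedOn S := by
    apply sup_le
    · exact inf_le_right.trans (supportedOn_mono Finset.subset_union_left)
    · exact inf_le_right.trans (supportedOn_mono Finset.subset_union_right)
  -- dim W ≤ dim (D ⊓ supp X) + |S \ X|
  have hdW : Module.finrank (ZMod 2) ↥W ≤
      Module.finrank (ZMod 2) ↥(D ⊓ supportedOn X) + (S \ X).card := by
    set f : (α → ZMod 2) →ₗ[ZMod 2] ((S \ X : Finset α) → ZMod 2) :=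
      LinearMap.funLeft (ZMod 2) (ZMod 2) (fun i => (i : α)) with hf
    set g := f.domRestrict W with hg
    have hrn : Module.finrank (ZMod 2) ↥(LinearMap.range g) +
        Module.finrank (ZMod 2) ↥(LinearMap.ker g) = Module.finrank (ZMod 2) ↥W :=
      LinearMap.finrank_range_add_finrank_ker g
    have hrange : Module.finrank (ZMod 2) ↥(LinearMap.range g) ≤ (S \ X).card := by
      have := Submodule.finrank_le (LinearMap.range g)
      rwa [Module.finrank_pi, Fintype.card_coe] at this
    have hker : Module.finrank (ZMod 2) ↥(LinearMap.ker g) ≤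
        Module.finrank (ZMod 2) ↥(D ⊓ supportedOn X) := by
      rw [← Submodule.finrank_map_subtype_eq W (LinearMap.ker g)]
      apply Submodule.finrank_mono
      rintro x hx
      simp only [Submodule.mem_map] at hx
      obtain ⟨⟨w, hw⟩, hk, rfl⟩ := hx
      have hval : ∀ i ∈ S \ X, w i = 0 := by
        intro i hi
        have : g ⟨w, hw⟩ = 0 := hk
        have := congrFun this ⟨i, hi⟩
        simpa [hg, hf, LinearMap.funLeft] using this
      have hsuppX : w ∈ supportedOn X := by
        rw [mem_supportedOn]
        intro i hi
        by_cases hiS : i ∈ S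
        · exact hval i (Finset.mem_sdiff.2 ⟨hiS, hi⟩)
        · exact (mem_supportedOn.1 (hWS hw)) i hiS
      refine Submodule.mem_inf.2 ⟨Submodule.mem_inf.2 ⟨?_, ?_⟩, hsuppX⟩
      · exact (sup_le (inf_le_left.trans le_sup_left) (inf_le_left.trans le_sup_right) : W ≤ 𝒞₁ ⊔ 𝒞₂) hw
      · exact supportedOn_mono hXE hsuppX
    omega
  -- card identity
  have hcard : Y₁.card + Y₂.card = S.card + (Y ∩ T).card := by
    rw [hS, ← hYinter]
    exact (Finset.card_union_add_card_inter Y₁ Y₂).symm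
  have hcardSX : (S \ X).card = S.card - X.card := Finset.card_sdiff_of_subset hXS
  have hXleS : X.card ≤ S.card := Finset.card_le_card hXS
  -- assemble
  simp only [rk]
  rw [← hV₁, ← hV₂]

  omega
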